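/- arXiv:0806.2495 — 6 statements merged into one kernel-verified Lean document; each statement's English description precedes it below -/
import Mathlib

section
/- For points A1=(x1,y1), A2=(x2,y2), A3=(x3,y3) in F² over a field F of characteristic ≠ 2, with quadrances Q1 = Q(A2,A3), Q2 = Q(A1,A3), Q3 = Q(A1,A2), the three points are collinear if and only if (Q1+Q2+Q3)² = 2(Q1²+Q2²+Q3²). -/
/-- The quadrance between two points of `F × F`. -/
def quadrance {F : Type*} [Field F] (A B : F × F) : F :=
  (B.1 - A.1) ^ 2 + (B.2 - A.2) ^ 2

/-- Three points are collinear when they lie on a common line `a*x + b*y + c = 0`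
with `(a, b) ≠ (0, 0)`. -/
def CollinearPts {F : Type*} [Field F] (A1 A2 A3 : F × F) : Prop :=
  ∃ a b c : F, ¬(a = 0 ∧ b = 0) ∧
    a * A1.1 + b * A1.2 + c = 0 ∧
    a * A2.1 + b * A2.2 + c = 0 ∧
    a * A3.1 + b * A3.2 + c = 0

/-!
Archimedes' identity `(Q₁ + Q₂ + Q₃)² - 2(Q₁² + Q₂² + Q₃²) = 4Δ²`, where `Δ` is the determinant
of `A₂ - A₁` and `A₃ - A₁` (twice the signed area), is a polynomial identity. Three points
are collinear exactly when `Δ = 0`, and since `4 ≠ 0` this is the vanishing of the left side.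
-/

namespace TripleQuad

variable {F : Type*} [Field F]

def areaDet (A1 A2 A3 : F × F) : F :=
  (A2.1 - A1.1) * (A3.2 - A1.2) - (A3.1 - A1.1) * (A2.2 - A1.2)

theorem quadrance_archimedes (A1 A2 A3 : F × F) :
    (quadrance A2 A3 + quadrance A1 A3 + quadrance A1 A2) ^ 2
        - 2 * (quadrance A2 A3 ^ 2 + quadrance A1 A3 ^ 2 + quadrance A1 A2 ^ 2)
      = 4 * areaDet A1 A2 A3 ^ 2 := by
  simp only [quadrance, areaDet]
  ring

theorem areaDet_eq_zero_of_collinearPts {A1 A2 A3 : F × F} (h : CollinearPts A1 A2 A3) :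
    areaDet A1 A2 A3 = 0 := by
  obtain ⟨a, b, c, hab, h1, h2, h3⟩ := h
  have had : a * areaDet A1 A2 A3 = 0 := by
    unfold areaDet
    linear_combination (A2.2 - A3.2) * h1 + (A3.2 - A1.2) * h2 + (A1.2 - A2.2) * h3
  have hbd : b * areaDet A1 A2 A3 = 0 := by
    unfold areaDet
    linear_combination (A3.1 - A2.1) * h1 + (A1.1 - A3.1) * h2 + (A2.1 - A1.1) * h3
  by_cases ha : a = 0
  · exact (mul_eq_zero.mp hbd).resolve_left fun hb => hab ⟨ha, hb⟩
  · exact (mul_eq_zero.mp had).resolve_left ha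

theorem line_coeffs_ne_zero_of_ne {P R : F × F} (hPR : P ≠ R) :
    ¬(P.2 - R.2 = 0 ∧ R.1 - P.1 = 0) := by
  rintro ⟨h2, h1⟩
  exact hPR (Prod.ext (sub_eq_zero.mp h1).symm (sub_eq_zero.mp h2))

theorem exists_line_through (P R : F × F) :
    ∃ a b c : F, ¬(a = 0 ∧ b = 0) ∧ a * P.1 + b * P.2 + c = 0 ∧ a * R.1 + b * R.2 + c = 0 := by
  by_cases hPR : P = R
  · subst hPR
    exact ⟨1, 0, -P.1, by simp, by ring, by ring⟩
  · exact ⟨P.2 - R.2, R.1 - P.1, P.1 * R.2 - R.1 * P.2,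
      line_coeffs_ne_zero_of_ne hPR, by ring, by ring⟩

theorem collinearPts_of_areaDet_eq_zero {A1 A2 A3 : F × F} (h : areaDet A1 A2 A3 = 0) :
    CollinearPts A1 A2 A3 := by
  by_cases h12 : A1 = A2
  · subst h12
    obtain ⟨a, b, c, hab, h1, h3⟩ := exists_line_through A1 A3
    exact ⟨a, b, c, hab, h1, h1, h3⟩
  · refine ⟨A1.2 - A2.2, A2.1 - A1.1, A1.1 * A2.2 - A2.1 * A1.2,
      line_coeffs_ne_zero_of_ne h12, by ring, by ring, ?_⟩
    unfold areaDet at h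
    linear_combination h

theorem collinearPts_iff_areaDet_eq_zero {A1 A2 A3 : F × F} :
    CollinearPts A1 A2 A3 ↔ areaDet A1 A2 A3 = 0 :=
  ⟨areaDet_eq_zero_of_collinearPts, collinearPts_of_areaDet_eq_zero⟩

end TripleQuad

/-- Triple quad formula. -/
theorem triple_quad_formula {F : Type*} [Field F] (h2 : (2 : F) ≠ 0)
    (A1 A2 A3 : F × F)
    (Q1 Q2 Q3 : F)
    (hQ1 : Q1 = quadrance A2 A3) (hQ2 : Q2 = quadrance A1 A3)
    (hQ3 : Q3 = quadrance A1 A2) :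
    CollinearPts A1 A2 A3 ↔
      (Q1 + Q2 + Q3) ^ 2 = 2 * (Q1 ^ 2 + Q2 ^ 2 + Q3 ^ 2) := by
  have h4 : (4 : F) ≠ 0 := by
    rw [show (4 : F) = 2 * 2 by norm_num]
    exact mul_ne_zero h2 h2
  subst hQ1 hQ2 hQ3
  rw [TripleQuad.collinearPts_iff_areaDet_eq_zero, ← sub_eq_zero (a := (_ + _ + _) ^ 2),
    TripleQuad.quadrance_archimedes, mul_eq_zero, or_iff_right h4, pow_eq_zero_iff two_ne_zero]
end

section
/- For three distinct points A1, A2, A3 in F² over a field F of characteristic ≠ 2, the lines A1A3 and A2A3 are perpendicular if and only if Q(A2,A3) + Q(A1,A3) = Q(A1,A2) (Pythagoras' theorem in universal geometry). -/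
/-- The line `⟨a : b : c⟩` through two distinct points. -/
def lineThrough {F : Type*} [Field F] (A B : F × F) : F × F × F :=
  (A.2 - B.2, B.1 - A.1, A.1 * B.2 - B.1 * A.2)

/-- Lines `⟨a1:b1:c1⟩` and `⟨a2:b2:c2⟩` are perpendicular when `a1*a2 + b1*b2 = 0`. -/
def Perp {F : Type*} [Field F] (l m : F × F × F) : Prop :=
  l.1 * m.1 + l.2.1 * m.2.1 = 0

/-- The normal `(a, b)` of `lineThrough A C` is `A - C` turned by a quarter turn, so this is the
polarization identity for the vectors `C - A` and `C - B`. -/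
theorem quadrance_add_quadrance_sub_quadrance {F : Type*} [Field F] (A B C : F × F) :
    quadrance B C + quadrance A C - quadrance A B =
      2 * ((lineThrough A C).1 * (lineThrough B C).1 +
        (lineThrough A C).2.1 * (lineThrough B C).2.1) := by
  simp only [quadrance, lineThrough]
  ring

theorem pythagoras_general {F : Type*} [Field F] (h2 : (2 : F) ≠ 0)
    (A1 A2 A3 : F × F) :
    Perp (lineThrough A1 A3) (lineThrough A2 A3) ↔
      quadrance A2 A3 + quadrance A1 A3 = quadrance A1 A2 := by
  rw [← sub_eq_zero, quadrance_add_quadrance_sub_quadrance, mul_eq_zero, or_iff_right h2]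
  rfl

/-- Pythagoras' theorem in universal geometry. -/
theorem pythagoras {F : Type*} [Field F] (h2 : (2 : F) ≠ 0)
    (A1 A2 A3 : F × F) (h12 : A1 ≠ A2) (h13 : A1 ≠ A3) (h23 : A2 ≠ A3) :
    Perp (lineThrough A1 A3) (lineThrough A2 A3) ↔
      quadrance A2 A3 + quadrance A1 A3 = quadrance A1 A2 :=
  pythagoras_general h2 A1 A2 A3
end

section
/- For a non-null triangle A1A2A3 in F² over a field F of characteristic ≠ 2, with quadrances Q1, Q2, Q3 and spreads s1, s2, s3 (the spread si being at vertex Ai), the spread law holds: s1·Q2 = s2·Q1, s2·Q3 = s3·Q2, and s1·Q3 = s3·Q1. -/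
/-- A line `⟨a : b : c⟩` is null when `a^2 + b^2 = 0`. -/
def IsNullLine {F : Type*} [Field F] (l : F × F × F) : Prop :=
  l.1 ^ 2 + l.2.1 ^ 2 = 0

/-- The spread between two (non-null) lines. -/
def spread {F : Type*} [Field F] (l m : F × F × F) : F :=
  (l.1 * m.2.1 - m.1 * l.2.1) ^ 2 /
    ((l.1 ^ 2 + l.2.1 ^ 2) * (m.1 ^ 2 + m.2.1 ^ 2))

/-! The spread at a vertex `A` between the sides towards `B` and `C` is `d² / (Q(A,B) Q(A,C))`,
where `d = cross A B C` is twice the signed area of the triangle, and `d²` does not depend on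
the labelling of the vertices. Hence `s₁ = d² / (Q₃ Q₂)`, `s₂ = d² / (Q₃ Q₁)`, `s₃ = d² / (Q₂ Q₁)`,
and the law is an identity of rational functions once the quadrances are nonzero. -/

section SpreadLaw

variable {F : Type*} [Field F]

def cross (A B C : F × F) : F :=
  (B.1 - A.1) * (C.2 - A.2) - (B.2 - A.2) * (C.1 - A.1)

theorem cross_swap (A B C : F × F) : cross B A C = -cross A B C := by
  unfold cross; ring

theorem cross_rotate (A B C : F × F) : cross B C A = cross A B C := by
  unfold cross; ring

theorem quadrance_comm (A B : F × F) : quadrance A B = quadrance B A := by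
  unfold quadrance; ring

theorem isNullLine_lineThrough_iff (A B : F × F) :
    IsNullLine (lineThrough A B) ↔ quadrance A B = 0 := by
  unfold IsNullLine lineThrough quadrance
  constructor <;> intro h <;> linear_combination h

theorem spread_lineThrough (A B C : F × F) :
    spread (lineThrough A B) (lineThrough A C) = cross A B C ^ 2 / (quadrance A B * quadrance A C) := by
  unfold spread lineThrough cross quadrance
  congr 1 <;> ring

end SpreadLaw

theorem spread_law_general {F : Type*} [Field F]
    (A1 A2 A3 : F × F)
    (hn1 : ¬ IsNullLine (lineThrough A2 A3))
    (hn2 : ¬ IsNullLine (lineThrough A1 A3))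
    (hn3 : ¬ IsNullLine (lineThrough A1 A2))
    (Q1 Q2 Q3 s1 s2 s3 : F)
    (hQ1 : Q1 = quadrance A2 A3) (hQ2 : Q2 = quadrance A1 A3)
    (hQ3 : Q3 = quadrance A1 A2)
    (hs1 : s1 = spread (lineThrough A1 A2) (lineThrough A1 A3))
    (hs2 : s2 = spread (lineThrough A2 A1) (lineThrough A2 A3))
    (hs3 : s3 = spread (lineThrough A3 A1) (lineThrough A3 A2)) :
    s1 * Q2 = s2 * Q1 ∧ s2 * Q3 = s3 * Q2 ∧ s1 * Q3 = s3 * Q1 := by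
  rw [isNullLine_lineThrough_iff, ← hQ1] at hn1
  rw [isNullLine_lineThrough_iff, ← hQ2] at hn2
  rw [isNullLine_lineThrough_iff, ← hQ3] at hn3
  have hs1' : s1 = cross A1 A2 A3 ^ 2 / (Q3 * Q2) := by
    rw [hs1, spread_lineThrough, hQ2, hQ3]
  have hs2' : s2 = cross A1 A2 A3 ^ 2 / (Q3 * Q1) := by
    rw [hs2, spread_lineThrough, cross_swap, neg_sq, quadrance_comm, hQ1, hQ3]
  have hs3' : s3 = cross A1 A2 A3 ^ 2 / (Q2 * Q1) := by
    rw [hs3, spread_lineThrough, ← cross_rotate, quadrance_comm, quadrance_comm A3, hQ1, hQ2]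
  subst hs1' hs2' hs3'
  refine ⟨?_, ?_, ?_⟩ <;> field_simp

/-- The spread law for a non-null triangle. -/
theorem spread_law {F : Type*} [Field F] (h2 : (2 : F) ≠ 0)
    (A1 A2 A3 : F × F) (hnc : ¬ CollinearPts A1 A2 A3)
    (hn1 : ¬ IsNullLine (lineThrough A2 A3))
    (hn2 : ¬ IsNullLine (lineThrough A1 A3))
    (hn3 : ¬ IsNullLine (lineThrough A1 A2))
    (Q1 Q2 Q3 s1 s2 s3 : F)
    (hQ1 : Q1 = quadrance A2 A3) (hQ2 : Q2 = quadrance A1 A3)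
    (hQ3 : Q3 = quadrance A1 A2)
    (hs1 : s1 = spread (lineThrough A1 A2) (lineThrough A1 A3))
    (hs2 : s2 = spread (lineThrough A2 A1) (lineThrough A2 A3))
    (hs3 : s3 = spread (lineThrough A3 A1) (lineThrough A3 A2)) :
    s1 * Q2 = s2 * Q1 ∧ s2 * Q3 = s3 * Q2 ∧ s1 * Q3 = s3 * Q1 :=
  spread_law_general A1 A2 A3 hn1 hn2 hn3 Q1 Q2 Q3 s1 s2 s3 hQ1 hQ2 hQ3 hs1 hs2 hs3
end

section
/- Reflection in a non-null line preserves quadrance: if l is a non-null line in F² and A, B are points, then Q(σ_l(A), σ_l(B)) = Q(A,B). -/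
/-- Reflection of the point `(x, y)` in the non-null line `⟨a : b : c⟩`. -/
def reflectPt {F : Type*} [Field F] (l : F × F × F) (A : F × F) : F × F :=
  (((l.2.1 ^ 2 - l.1 ^ 2) * A.1 - 2 * l.1 * l.2.1 * A.2 - 2 * l.1 * l.2.2) /
      (l.1 ^ 2 + l.2.1 ^ 2),
   (-(2 * l.1 * l.2.1) * A.1 + (l.1 ^ 2 - l.2.1 ^ 2) * A.2 - 2 * l.2.1 * l.2.2) /
      (l.1 ^ 2 + l.2.1 ^ 2))

/-- Reflection of the line `⟨a1 : b1 : c1⟩` in the non-null line `⟨a : b : c⟩`. -/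
def reflectLine {F : Type*} [Field F] (l m : F × F × F) : F × F × F :=
  ((l.1 ^ 2 - l.2.1 ^ 2) * m.1 + 2 * l.1 * l.2.1 * m.2.1,
   2 * l.1 * l.2.1 * m.1 - (l.1 ^ 2 - l.2.1 ^ 2) * m.2.1,
   2 * l.1 * l.2.2 * m.1 + 2 * l.2.1 * l.2.2 * m.2.1 - (l.1 ^ 2 + l.2.1 ^ 2) * m.2.2)

theorem sq_add_sq_reflectLinear {R : Type*} [CommRing R] (a b u v : R) :
    ((b ^ 2 - a ^ 2) * u - 2 * a * b * v) ^ 2 + (-(2 * a * b) * u + (a ^ 2 - b ^ 2) * v) ^ 2 =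
      (a ^ 2 + b ^ 2) ^ 2 * (u ^ 2 + v ^ 2) := by
  ring

theorem reflection_preserves_quadrance_general {F : Type*} [Field F]
    (l : F × F × F) (hl : ¬ IsNullLine l) (A B : F × F) :
    quadrance (reflectPt l A) (reflectPt l B) = quadrance A B := by
  obtain ⟨a, b, c⟩ := l
  have hn : a ^ 2 + b ^ 2 ≠ 0 := hl
  calc quadrance (reflectPt (a, b, c) A) (reflectPt (a, b, c) B)
      = (((b ^ 2 - a ^ 2) * (B.1 - A.1) - 2 * a * b * (B.2 - A.2)) ^ 2 +
          (-(2 * a * b) * (B.1 - A.1) + (a ^ 2 - b ^ 2) * (B.2 - A.2)) ^ 2) /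
          (a ^ 2 + b ^ 2) ^ 2 := by
        simp only [quadrance, reflectPt]
        field_simp
        ring
    _ = quadrance A B := by
        rw [sq_add_sq_reflectLinear, quadrance, mul_div_cancel_left₀ _ (pow_ne_zero 2 hn)]

/-- Reflection in a non-null line preserves quadrance. -/
theorem reflection_preserves_quadrance {F : Type*} [Field F] (h2 : (2 : F) ≠ 0)
    (l : F × F × F) (hl : ¬ IsNullLine l) (A B : F × F) :
    quadrance (reflectPt l A) (reflectPt l B) = quadrance A B :=
  reflection_preserves_quadrance_general l hl A B
end

section
/- Reflection in a non-null line preserves spread: if l is a non-null line and m1, m2 are non-null lines whose images Σ_l(m1), Σ_l(m2) under reflection in l are also non-null, then s(Σ_l(m1), Σ_l(m2)) = s(m1, m2). -/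
/-!
On normal vectors `(a₁, b₁)`, reflection in `⟨a : b : c⟩` acts by the matrix
`[[a² - b², 2ab], [2ab, -(a² - b²)]]`, which is `a² + b²` times an orthogonal reflection.
It therefore multiplies `a₁² + b₁²` by `(a² + b²)²` and the cross term `a₁b₂ - a₂b₁` by
`-(a² + b²)²`, and these factors cancel in the spread once `a² + b² ≠ 0`.
-/

theorem reflectLine_normSq {F : Type*} [Field F] (l m : F × F × F) :
    (reflectLine l m).1 ^ 2 + (reflectLine l m).2.1 ^ 2 =
      (l.1 ^ 2 + l.2.1 ^ 2) ^ 2 * (m.1 ^ 2 + m.2.1 ^ 2) := by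
  simp only [reflectLine]
  ring

theorem reflectLine_cross {F : Type*} [Field F] (l m1 m2 : F × F × F) :
    (reflectLine l m1).1 * (reflectLine l m2).2.1 - (reflectLine l m2).1 * (reflectLine l m1).2.1 =
      -(l.1 ^ 2 + l.2.1 ^ 2) ^ 2 * (m1.1 * m2.2.1 - m2.1 * m1.2.1) := by
  simp only [reflectLine]
  ring

theorem reflection_preserves_spread_general {F : Type*} [Field F]
    (l m1 m2 : F × F × F) (hl : ¬ IsNullLine l) :
    spread (reflectLine l m1) (reflectLine l m2) = spread m1 m2 := by
  set k := l.1 ^ 2 + l.2.1 ^ 2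
  have hk : k ^ 4 ≠ 0 := pow_ne_zero 4 hl
  calc spread (reflectLine l m1) (reflectLine l m2)
      = k ^ 4 * (m1.1 * m2.2.1 - m2.1 * m1.2.1) ^ 2 /
          (k ^ 4 * ((m1.1 ^ 2 + m1.2.1 ^ 2) * (m2.1 ^ 2 + m2.2.1 ^ 2))) := by
        rw [spread, reflectLine_cross, reflectLine_normSq, reflectLine_normSq]
        ring
    _ = spread m1 m2 := mul_div_mul_left _ _ hk

/-- Reflection in a non-null line preserves the spread between non-null lines. -/
theorem reflection_preserves_spread {F : Type*} [Field F] (h2 : (2 : F) ≠ 0)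
    (l m1 m2 : F × F × F) (hl : ¬ IsNullLine l)
    (hm1 : ¬ IsNullLine m1) (hm2 : ¬ IsNullLine m2)
    (hm1' : ¬ IsNullLine (reflectLine l m1)) (hm2' : ¬ IsNullLine (reflectLine l m2)) :
    spread (reflectLine l m1) (reflectLine l m2) = spread m1 m2 :=
  reflection_preserves_spread_general l m1 m2 hl
end

section
/- Let F be a field in which -3 is not a square. Then any two tangent conics of the affine cubic y² = ax³ + bx + c at distinct points of the curve are either identical or disjoint. Specifically, the tangent conics at points (x0,y0) and (x1,y1) on the curve, given by y² - 3ax0·x² + (3ax0² - b)x - ax0³ - c = 0 and the analogous equation with x1, have no common point in F² when x0 ≠ x1. -/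
/-!
Subtracting the two conic equations kills `y²` and leaves `a (x₁ - x₀) q(x) = 0`, where
`q(x) = 3x² - 3(x₀ + x₁)x + (x₀² + x₀x₁ + x₁²)`. The discriminant of `q` is `-3 (x₀ - x₁)²`,
which is not a square when `-3` is not, so `q` has no root in `F`.
-/

section

variable {F : Type*} [Field F]

def tangentConic (a b c x₀ x y : F) : F :=
  y ^ 2 - 3 * a * x₀ * x ^ 2 + (3 * a * x₀ ^ 2 - b) * x - a * x₀ ^ 3 - c

theorem tangentConic_sub_tangentConic (a b c x₀ x₁ x y : F) :
    tangentConic a b c x₀ x y - tangentConic a b c x₁ x y =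
      a * (x₁ - x₀) * (3 * (x * x) + -3 * (x₀ + x₁) * x + (x₀ ^ 2 + x₀ * x₁ + x₁ ^ 2)) := by
  unfold tangentConic
  ring

theorem discrim_eq_neg_three_mul_sq (x₀ x₁ : F) :
    discrim 3 (-3 * (x₀ + x₁)) (x₀ ^ 2 + x₀ * x₁ + x₁ ^ 2) = -3 * (x₀ - x₁) ^ 2 := by
  unfold discrim
  ring

theorem neg_three_mul_sq_ne_sq (hsq : ¬ ∃ r : F, r ^ 2 = -3) {d : F} (hd : d ≠ 0) (s : F) :
    -3 * d ^ 2 ≠ s ^ 2 := fun h => hsq ⟨s / d, by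
  rw [div_pow, ← h, mul_div_assoc, div_self (pow_ne_zero 2 hd), mul_one]⟩

theorem tangentConic_ne_or_ne (hsq : ¬ ∃ r : F, r ^ 2 = -3) {a : F} (ha : a ≠ 0) (b c : F)
    {x₀ x₁ : F} (hne : x₀ ≠ x₁) (x y : F) :
    tangentConic a b c x₀ x y ≠ 0 ∨ tangentConic a b c x₁ x y ≠ 0 := by
  have hq : 3 * (x * x) + -3 * (x₀ + x₁) * x + (x₀ ^ 2 + x₀ * x₁ + x₁ ^ 2) ≠ 0 :=
    quadratic_ne_zero_of_discrim_ne_sq (fun s => by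
      rw [discrim_eq_neg_three_mul_sq]
      exact neg_three_mul_sq_ne_sq hsq (sub_ne_zero.mpr hne) s) x
  have hsub := tangentConic_sub_tangentConic a b c x₀ x₁ x y
  by_contra! h
  rw [h.1, h.2, sub_zero, eq_comm] at hsub
  exact mul_ne_zero (mul_ne_zero ha (sub_ne_zero.mpr hne.symm)) hq hsub

end

theorem tangent_conics_disjoint_general {F : Type*} [Field F]
    (hsq : ¬ ∃ r : F, r ^ 2 = -3)
    (a b c : F) (ha : a ≠ 0) (x0 x1 : F)
    (hne : x0 ≠ x1) :
    ¬ ∃ x y : F,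
      y ^ 2 - 3 * a * x0 * x ^ 2 + (3 * a * x0 ^ 2 - b) * x - a * x0 ^ 3 - c = 0 ∧
      y ^ 2 - 3 * a * x1 * x ^ 2 + (3 * a * x1 ^ 2 - b) * x - a * x1 ^ 3 - c = 0 := by
  rintro ⟨x, y, h0, h1⟩
  exact (tangentConic_ne_or_ne hsq ha b c hne x y).elim (· h0) (· h1)

/-- Tangent conics of `y² = ax³ + bx + c` at distinct points are disjoint when
`-3` is not a square in the field. -/
theorem tangent_conics_disjoint {F : Type*} [Field F]
    (h2 : (2 : F) ≠ 0) (h3 : (3 : F) ≠ 0)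
    (hsq : ¬ ∃ r : F, r ^ 2 = -3)
    (a b c : F) (ha : a ≠ 0) (x0 y0 x1 y1 : F)
    (h0 : y0 ^ 2 = a * x0 ^ 3 + b * x0 + c)
    (h1 : y1 ^ 2 = a * x1 ^ 3 + b * x1 + c)
    (hne : x0 ≠ x1) :
    ¬ ∃ x y : F,
      y ^ 2 - 3 * a * x0 * x ^ 2 + (3 * a * x0 ^ 2 - b) * x - a * x0 ^ 3 - c = 0 ∧
      y ^ 2 - 3 * a * x1 * x ^ 2 + (3 * a * x1 ^ 2 - b) * x - a * x1 ^ 3 - c = 0 :=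
  tangent_conics_disjoint_general hsq a b c ha x0 x1 hne
end
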